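/- arXiv:1911.06759 — 4 statements merged into one kernel-verified Lean document; each statement's English description precedes it below -/
import Mathlib

section
/- Let G be a cubic graph with three perfect matchings M1, M2, M3 and let E_i be the set of edges contained in exactly i of them. Let C be a circuit of the subgraph G[E_0 ∪ E_2] and let σ(C) denote the number of vertices of C incident with an edge of E_3. Then 2·|E(C) ∩ E_0| = |E(C)| + σ(C). -/
open Finset

def IsPerfectMatchingFinset {V : Type*} [Fintype V] [DecidableEq V]
    (G : SimpleGraph V) (M : Finset (Sym2 V)) : Prop :=
  (∀ e ∈ M, e ∈ G.edgeSet) ∧ ∀ v : V, (M.filter (fun e => v ∈ e)).card = 1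

def edgeMult {V : Type*} [DecidableEq V] (M : Fin 3 → Finset (Sym2 V)) (e : Sym2 V) : ℕ :=
  (Finset.univ.filter fun i => e ∈ M i).card

/-- The set of edges of `G` contained in exactly `i` of the three matchings. -/
def matchClass {V : Type*} [Fintype V] [DecidableEq V]
    (G : SimpleGraph V) [DecidableRel G.Adj] (M : Fin 3 → Finset (Sym2 V)) (i : ℕ) :
    Finset (Sym2 V) :=
  G.edgeFinset.filter fun e => edgeMult M e = i

/-- For a circuit `C` of `G[E_0 ∪ E_2]` (a connected subgraph, 2-regular on its
vertices, with all edges in `E_0 ∪ E_2`), we have `2|E(C) ∩ E_0| = |E(C)| + σ(C)`,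
where `σ(C)` is the number of vertices of `C` incident with an edge of `E_3`. -/
theorem stmt4 {V : Type*} [Fintype V] [DecidableEq V]
    (G : SimpleGraph V) [DecidableRel G.Adj]
    (hcubic : ∀ v : V, G.degree v = 3)
    (M : Fin 3 → Finset (Sym2 V))
    (hM : ∀ i, IsPerfectMatchingFinset G (M i))
    (C : G.Subgraph)
    (hCedges : C.edgeSet ⊆ ↑(matchClass G M 0 ∪ matchClass G M 2))
    (hCconn : C.Connected)
    (hCreg : ∀ v ∈ C.verts, (C.neighborSet v).ncard = 2) :
    2 * (C.edgeSet ∩ ↑(matchClass G M 0)).ncard =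
      C.edgeSet.ncard +
        (C.verts ∩ {v | ∃ e ∈ matchClass G M 3, v ∈ e}).ncard := by
  classical
  set Vc : Finset V := C.verts.toFinset with hVcdef
  set EC : Finset (Sym2 V) := C.edgeSet.toFinset with hECdef
  have hmemEC : ∀ e, e ∈ EC ↔ e ∈ C.edgeSet := by
    intro e; simp [hECdef, Set.mem_toFinset]
  have hmemVc : ∀ v, v ∈ Vc ↔ v ∈ C.verts := by
    intro v; simp [hVcdef, Set.mem_toFinset]
  have hedgeG : ∀ e ∈ C.edgeSet, e ∈ G.edgeSet := fun e he => C.edgeSet_subset he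
  have hmult : ∀ e ∈ C.edgeSet, edgeMult M e = 0 ∨ edgeMult M e = 2 := by
    intro e he
    have := hCedges he
    simp only [coe_union, Set.mem_union, mem_coe, matchClass, mem_filter] at this
    tauto
  -- each edge of C has exactly 2 endpoints, all in Vc
  have card2 : ∀ e ∈ C.edgeSet, (Vc.filter (fun v => v ∈ e)).card = 2 := by
    intro e he
    induction e with
    | h x y =>
      rw [SimpleGraph.Subgraph.mem_edgeSet] at he
      have hxy : x ≠ y := he.adj_sub.ne
      have : Vc.filter (fun v => v ∈ s(x, y)) = {x, y} := by
        ext v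
        simp only [mem_filter, Sym2.mem_iff, mem_insert, mem_singleton]
        constructor
        · tauto
        · rintro (rfl | rfl)
          · exact ⟨(hmemVc v).mpr he.fst_mem, Or.inl rfl⟩
          · exact ⟨(hmemVc v).mpr he.snd_mem, Or.inr rfl⟩
      rw [this, card_pair hxy]
  -- double counting
  have keyA : ∀ F : Finset (Sym2 V), (↑F ⊆ C.edgeSet) →
      ∑ v ∈ Vc, (F.filter (fun e => v ∈ e)).card = 2 * F.card := by
    intro F hF
    have h1 : ∀ v : V, (F.filter (fun e => v ∈ e)).card = ∑ e ∈ F, if v ∈ e then 1 else 0 := by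
      intro v; rw [Finset.card_filter]
    simp_rw [h1]
    rw [Finset.sum_comm]
    have h2 : ∀ e ∈ F, (∑ v ∈ Vc, if v ∈ e then 1 else 0) = 2 := by
      intro e heF
      rw [← Finset.card_filter]
      exact card2 e (hF heF)
    rw [Finset.sum_congr rfl h2, Finset.sum_const, smul_eq_mul, mul_comm]
  -- each vertex of C is on exactly 2 edges of C
  have hdeg : ∀ v ∈ Vc, (EC.filter (fun e => v ∈ e)).card = 2 := by
    intro v hv
    have hn : (C.neighborSet v).toFinset.card = 2 := by
      rw [← Set.ncard_eq_toFinset_card']; exact hCreg v ((hmemVc v).mp hv)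
    rw [← hn]
    symm
    apply Finset.card_bij (fun w _ => s(v, w))
    · intro w hw
      rw [Set.mem_toFinset] at hw
      simp only [mem_filter, hmemEC, SimpleGraph.Subgraph.mem_edgeSet]
      exact ⟨hw, Sym2.mem_mk_left v w⟩
    · intro w1 hw1 w2 hw2 h
      rw [Sym2.eq_iff] at h
      rcases h with ⟨-, h⟩ | ⟨h1, h2⟩
      · exact h
      · exact h2.trans h1
    · intro e he
      simp only [mem_filter, hmemEC] at he
      obtain ⟨heC, hve⟩ := he
      induction e with
      | h x y =>
        rw [SimpleGraph.Subgraph.mem_edgeSet] at heC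
        rcases Sym2.mem_iff.mp hve with rfl | rfl
        · exact ⟨y, Set.mem_toFinset.mpr heC, rfl⟩
        · exact ⟨x, Set.mem_toFinset.mpr heC.symm, Sym2.eq_swap⟩
  -- key per-vertex computation
  have key : ∀ v ∈ Vc, ((EC ∩ matchClass G M 0).filter (fun e => v ∈ e)).card =
      if (∃ e ∈ matchClass G M 3, v ∈ e) then 2 else 1 := by
    intro v hv
    set I : Finset (Sym2 V) := G.incidenceFinset v with hIdef
    have hmemI : ∀ e, e ∈ I ↔ e ∈ G.edgeSet ∧ v ∈ e := by
      intro e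
      rw [hIdef, SimpleGraph.mem_incidenceFinset]
      exact Iff.rfl
    have hI3 : I.card = 3 := by
      rw [hIdef, SimpleGraph.card_incidenceFinset_eq_degree]; exact hcubic v
    have hsum : ∑ e ∈ I, edgeMult M e = 3 := by
      have h1 : ∀ e : Sym2 V, edgeMult M e = ∑ i : Fin 3, if e ∈ M i then 1 else 0 := by
        intro e; rw [edgeMult, Finset.card_filter]
      simp_rw [h1]
      rw [Finset.sum_comm]
      have h2 : ∀ i : Fin 3, (∑ e ∈ I, if e ∈ M i then 1 else 0) = 1 := by
        intro i
        rw [← Finset.card_filter]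
        have : I.filter (fun e => e ∈ M i) = (M i).filter (fun e => v ∈ e) := by
          ext e
          simp only [mem_filter, hmemI]
          constructor
          · tauto
          · rintro ⟨h1, h2⟩; exact ⟨⟨(hM i).1 e h1, h2⟩, h1⟩
        rw [this, (hM i).2 v]
      rw [Finset.sum_congr rfl (fun i _ => h2 i), Finset.sum_const]
      simp
    set ICv : Finset (Sym2 V) := EC.filter (fun e => v ∈ e) with hICvdef
    have hICI : ICv ⊆ I := by
      intro e he
      rw [hICvdef, mem_filter, hmemEC] at he
      exact (hmemI e).mpr ⟨hedgeG e he.1, he.2⟩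
    have hIC2 : ICv.card = 2 := hdeg v hv
    have hmA : ∀ e ∈ ICv, edgeMult M e = 0 ∨ edgeMult M e = 2 := by
      intro e he
      rw [hICvdef, mem_filter, hmemEC] at he
      exact hmult e he.1
    have hfcard : (I \ ICv).card = 1 := by
      rw [card_sdiff_of_subset hICI, hI3, hIC2]
    obtain ⟨f, hf⟩ := Finset.card_eq_one.mp hfcard
    have hfI : f ∈ I := by
      have : f ∈ I \ ICv := hf ▸ mem_singleton_self f
      exact (mem_sdiff.mp this).1
    have hsplit : ∑ e ∈ ICv, edgeMult M e + edgeMult M f = 3 := by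
      have h := Finset.sum_sdiff (f := fun e => edgeMult M e) hICI
      rw [hf, Finset.sum_singleton] at h
      have h' : edgeMult M f + ∑ e ∈ ICv, edgeMult M e = ∑ e ∈ I, edgeMult M e := h
      omega
    obtain ⟨a, b, hab, hICab⟩ := Finset.card_eq_two.mp hIC2
    have haICv : a ∈ ICv := hICab ▸ mem_insert_self a {b}
    have hbICv : b ∈ ICv := hICab ▸ mem_insert_of_mem (mem_singleton_self b)
    have hsum2 : edgeMult M a + edgeMult M b + edgeMult M f = 3 := by
      rw [hICab, Finset.sum_pair hab] at hsplit
      omega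
    -- σ at v iff the third edge f has multiplicity 3
    have hσ : (∃ e ∈ matchClass G M 3, v ∈ e) ↔ edgeMult M f = 3 := by
      constructor
      · rintro ⟨e, he3, hve⟩
        rw [matchClass, mem_filter, SimpleGraph.mem_edgeFinset] at he3
        have heI : e ∈ I := (hmemI e).mpr ⟨he3.1, hve⟩
        have heIC : e ∉ ICv := by
          intro h
          rcases hmA e h with h' | h' <;> omega
        have : e ∈ I \ ICv := mem_sdiff.mpr ⟨heI, heIC⟩
        rw [hf, mem_singleton] at this
        subst this
        exact he3.2
      · intro h3
        obtain ⟨hfG, hvf⟩ := (hmemI f).mp hfI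
        exact ⟨f, by rw [matchClass, mem_filter, SimpleGraph.mem_edgeFinset]; exact ⟨hfG, h3⟩, hvf⟩
    have hfilter : (EC ∩ matchClass G M 0).filter (fun e => v ∈ e) =
        ICv.filter (fun e => edgeMult M e = 0) := by
      ext e
      simp only [mem_filter, mem_inter, hICvdef, matchClass, SimpleGraph.mem_edgeFinset]
      constructor
      · rintro ⟨⟨h1, h2, h3⟩, h4⟩
        exact ⟨⟨h1, h4⟩, h3⟩
      · rintro ⟨⟨h1, h2⟩, h3⟩
        exact ⟨⟨h1, hedgeG e ((hmemEC e).mp h1), h3⟩, h2⟩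
    rw [hfilter, hICab]
    rcases hmA a haICv with ha | ha <;> rcases hmA b hbICv with hb | hb
    · rw [if_pos (hσ.mpr (by omega)), filter_insert, if_pos ha, filter_singleton, if_pos hb,
        card_pair hab]
    · rw [if_neg (fun h => by have := hσ.mp h; omega), filter_insert, if_pos ha,
        filter_singleton, if_neg (by omega : ¬ edgeMult M b = 0)]
      simp
    · rw [if_neg (fun h => by have := hσ.mp h; omega), filter_insert,
        if_neg (by omega : ¬ edgeMult M a = 0), filter_singleton, if_pos hb]
      simp
    · omega
  -- assemble
  have hECsub : (↑EC : Set (Sym2 V)) ⊆ C.edgeSet := by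
    intro e he; exact (hmemEC e).mp (mem_coe.mp he)
  have hE0sub : (↑(EC ∩ matchClass G M 0) : Set (Sym2 V)) ⊆ C.edgeSet := by
    intro e he
    rw [mem_coe, mem_inter] at he
    exact (hmemEC e).mp he.1
  have h2a := keyA (EC ∩ matchClass G M 0) hE0sub
  have h2b := keyA EC hECsub
  have hVEcard : Vc.card = EC.card := by
    have : ∑ v ∈ Vc, (EC.filter (fun e => v ∈ e)).card = 2 * Vc.card := by
      rw [Finset.sum_congr rfl hdeg, Finset.sum_const, smul_eq_mul, mul_comm]
    omega
  have hkeysum : ∑ v ∈ Vc, ((EC ∩ matchClass G M 0).filter (fun e => v ∈ e)).card =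
      Vc.card + (Vc.filter (fun v => ∃ e ∈ matchClass G M 3, v ∈ e)).card := by
    rw [Finset.sum_congr rfl key]
    have : ∀ v : V, (if (∃ e ∈ matchClass G M 3, v ∈ e) then 2 else 1) =
        1 + (if (∃ e ∈ matchClass G M 3, v ∈ e) then 1 else 0) := by
      intro v; split <;> rfl
    simp_rw [this]
    rw [Finset.sum_add_distrib, Finset.sum_const, smul_eq_mul, mul_one, ← Finset.card_filter]
  -- rewrite goal in Finset terms
  have g1 : (C.edgeSet ∩ ↑(matchClass G M 0)).ncard = (EC ∩ matchClass G M 0).card := by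
    rw [show C.edgeSet ∩ ↑(matchClass G M 0) = ↑(EC ∩ matchClass G M 0) by
      ext e; simp [Set.mem_inter_iff, hmemEC e], Set.ncard_coe_finset]
  have g2 : C.edgeSet.ncard = EC.card := by
    rw [show C.edgeSet = ↑EC by ext e; simp [hmemEC e], Set.ncard_coe_finset]
  have g3 : (C.verts ∩ {v | ∃ e ∈ matchClass G M 3, v ∈ e}).ncard =
      (Vc.filter (fun v => ∃ e ∈ matchClass G M 3, v ∈ e)).card := by
    rw [show C.verts ∩ {v | ∃ e ∈ matchClass G M 3, v ∈ e} =
        ↑(Vc.filter (fun v => ∃ e ∈ matchClass G M 3, v ∈ e)) by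
      ext v; simp [Set.mem_inter_iff, hmemVc v], Set.ncard_coe_finset]
  rw [g1, g2, g3]
  omega
end

section
/- Let G be a cubic graph with three perfect matchings M1, M2, M3 and let E_i be the set of edges contained in exactly i of them. For every circuit C of G[E_0 ∪ E_2], the length |E(C)| is odd if and only if σ(C) is odd, where σ(C) is the number of vertices of C incident with an edge of E_3. In particular, if no vertex of C is incident with an E_3 edge, then C has even length. -/
open Finset

section Aux

variable {V : Type*} [Fintype V] [DecidableEq V]

lemma matching_unique {G : SimpleGraph V} {Mi : Finset (Sym2 V)}
    (h : IsPerfectMatchingFinset G Mi) {v : V} {e e' : Sym2 V}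
    (he : e ∈ Mi) (hv : v ∈ e) (he' : e' ∈ Mi) (hv' : v ∈ e') : e = e' := by
  obtain ⟨x, hx⟩ := Finset.card_eq_one.mp (h.2 v)
  have h1 : e ∈ Mi.filter (fun e => v ∈ e) := mem_filter.mpr ⟨he, hv⟩
  have h2 : e' ∈ Mi.filter (fun e => v ∈ e) := mem_filter.mpr ⟨he', hv'⟩
  rw [hx, mem_singleton] at h1 h2
  rw [h1, h2]

lemma matching_exists {G : SimpleGraph V} {Mi : Finset (Sym2 V)}
    (h : IsPerfectMatchingFinset G Mi) (v : V) : ∃ e ∈ Mi, v ∈ e := by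
  obtain ⟨x, hx⟩ := Finset.card_eq_one.mp (h.2 v)
  have : x ∈ Mi.filter (fun e => v ∈ e) := hx ▸ mem_singleton_self x
  exact ⟨x, (mem_filter.mp this).1, (mem_filter.mp this).2⟩

lemma edgeMult_eq_three {M : Fin 3 → Finset (Sym2 V)} {e : Sym2 V} :
    edgeMult M e = 3 ↔ ∀ i, e ∈ M i := by
  classical
  unfold edgeMult
  constructor
  · intro h i
    have : (Finset.univ.filter fun i => e ∈ M i) = Finset.univ :=
      Finset.eq_univ_of_card _ (by simpa using h)
    have hi : i ∈ (Finset.univ.filter fun i => e ∈ M i) := by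
      rw [this]; exact mem_univ i
    exact (mem_filter.mp hi).2
  · intro h
    rw [Finset.filter_true_of_mem fun i _ => h i]
    simp

lemma edgeMult_eq_zero {M : Fin 3 → Finset (Sym2 V)} {e : Sym2 V} :
    edgeMult M e = 0 ↔ ∀ i, e ∉ M i := by
  classical
  unfold edgeMult
  rw [Finset.card_eq_zero, Finset.filter_eq_empty_iff]
  simp

/-- Per-vertex dichotomy at a vertex `v` of the circuit with the two circuit
edges `s(v,a)` and `s(v,b)`. -/
lemma dichotomy (G : SimpleGraph V) [DecidableRel G.Adj]
    (hcubic : ∀ v : V, G.degree v = 3)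
    (M : Fin 3 → Finset (Sym2 V)) (hM : ∀ i, IsPerfectMatchingFinset G (M i))
    {v a b : V} (hab : a ≠ b)
    (hGa : G.Adj v a) (hGb : G.Adj v b)
    (hma : edgeMult M s(v, a) = 0 ∨ edgeMult M s(v, a) = 2)
    (hmb : edgeMult M s(v, b) = 0 ∨ edgeMult M s(v, b) = 2) :
    ((∃ e ∈ matchClass G M 3, v ∈ e) →
        edgeMult M s(v, a) = 0 ∧ edgeMult M s(v, b) = 0) ∧
      (¬(∃ e ∈ matchClass G M 3, v ∈ e) →
        edgeMult M s(v, a) + edgeMult M s(v, b) = 2) := by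
  classical
  have hne : s(v, a) ≠ s(v, b) := fun h => hab (Sym2.congr_right.mp h)
  -- the two multiplicities sum to at most 3
  have hsum3 : edgeMult M s(v, a) + edgeMult M s(v, b) ≤ 3 := by
    have hdisj : Disjoint (Finset.univ.filter fun i => s(v, a) ∈ M i)
        (Finset.univ.filter fun i => s(v, b) ∈ M i) := by
      rw [Finset.disjoint_left]
      intro i hi hi'
      exact hne (matching_unique (hM i) (mem_filter.mp hi).2 (Sym2.mem_mk_left v a)
        (mem_filter.mp hi').2 (Sym2.mem_mk_left v b))
    calc edgeMult M s(v, a) + edgeMult M s(v, b)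
        = ((Finset.univ.filter fun i => s(v, a) ∈ M i) ∪
            (Finset.univ.filter fun i => s(v, b) ∈ M i)).card :=
          (Finset.card_union_of_disjoint hdisj).symm
      _ ≤ (Finset.univ : Finset (Fin 3)).card := Finset.card_le_card (subset_univ _)
      _ = 3 := by simp
  constructor
  · rintro ⟨e, heE3, hve⟩
    obtain ⟨heG, hm3⟩ := mem_filter.mp heE3
    have hall : ∀ i, e ∈ M i := edgeMult_eq_three.mp hm3
    constructor
    · rcases hma with h | h
      · exact h
      · exfalso
        have : ∃ i, s(v, a) ∈ M i := by
          by_contra hc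
          push_neg at hc
          rw [edgeMult_eq_zero.mpr hc] at h; omega
        obtain ⟨i, hi⟩ := this
        have : s(v, a) = e :=
          matching_unique (hM i) hi (Sym2.mem_mk_left v a) (hall i) hve
        rw [this, hm3] at h; omega
    · rcases hmb with h | h
      · exact h
      · exfalso
        have : ∃ i, s(v, b) ∈ M i := by
          by_contra hc
          push_neg at hc
          rw [edgeMult_eq_zero.mpr hc] at h; omega
        obtain ⟨i, hi⟩ := this
        have : s(v, b) = e :=
          matching_unique (hM i) hi (Sym2.mem_mk_left v b) (hall i) hve
        rw [this, hm3] at h; omega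
  · intro hP
    rcases hma with ha | ha <;> rcases hmb with hb | hb
    · -- both zero: the third edge is in all three matchings, contradiction
      exfalso
      apply hP
      have hsub : {s(v, a), s(v, b)} ⊆ G.incidenceFinset v := by
        intro e he
        rw [SimpleGraph.mem_incidenceFinset]
        rcases mem_insert.mp he with h | h
        · rw [h]
          exact ⟨hGa, Sym2.mem_mk_left v a⟩
        · rw [mem_singleton.mp h]
          exact ⟨hGb, Sym2.mem_mk_left v b⟩
      have hcard : (G.incidenceFinset v \ {s(v, a), s(v, b)}).card = 1 := by
        rw [Finset.card_sdiff_of_subset hsub, Finset.card_pair hne,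
          SimpleGraph.card_incidenceFinset_eq_degree, hcubic v]
      obtain ⟨t, ht⟩ := Finset.card_eq_one.mp hcard
      have hta : ∀ i, t ∈ M i := by
        intro i
        obtain ⟨g, hgM, hgv⟩ := matching_exists (hM i) v
        have hg_inc : g ∈ G.incidenceFinset v := by
          rw [SimpleGraph.mem_incidenceFinset]
          exact ⟨(hM i).1 g hgM, hgv⟩
        have hgne : g ∉ ({s(v, a), s(v, b)} : Finset (Sym2 V)) := by
          intro hgin
          rcases mem_insert.mp hgin with h | h
          · rw [h] at hgM
            exact absurd (edgeMult_eq_zero.mp ha i) (by simpa using hgM)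
          · rw [mem_singleton.mp h] at hgM
            exact absurd (edgeMult_eq_zero.mp hb i) (by simpa using hgM)
        have : g ∈ G.incidenceFinset v \ {s(v, a), s(v, b)} :=
          mem_sdiff.mpr ⟨hg_inc, hgne⟩
        rw [ht, mem_singleton] at this
        rwa [this] at hgM
      have ht_inc : t ∈ G.incidenceFinset v := by
        have : t ∈ G.incidenceFinset v \ {s(v, a), s(v, b)} :=
          ht ▸ mem_singleton_self t
        exact (mem_sdiff.mp this).1
      rw [SimpleGraph.mem_incidenceFinset] at ht_inc
      refine ⟨t, mem_filter.mpr ⟨?_, edgeMult_eq_three.mpr hta⟩, ht_inc.2⟩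
      rw [SimpleGraph.mem_edgeFinset]
      exact ht_inc.1
    · omega
    · omega
    · omega

lemma filter_card_comm {α β : Type*} (s : Finset α) (t : Finset β)
    (r : α → β → Prop) [∀ a b, Decidable (r a b)] :
    ∑ a ∈ s, (t.filter (fun b => r a b)).card
      = ∑ b ∈ t, (s.filter (fun a => r a b)).card := by
  simp only [Finset.card_filter]
  exact Finset.sum_comm

end Aux

/-- For a circuit `C` of `G[E_0 ∪ E_2]`, the length of `C` is odd iff `σ(C)` is
odd; in particular, if no vertex of `C` meets an `E_3` edge then `C` has even
length. -/
theorem stmt5 {V : Type*} [Fintype V] [DecidableEq V]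
    (G : SimpleGraph V) [DecidableRel G.Adj]
    (hcubic : ∀ v : V, G.degree v = 3)
    (M : Fin 3 → Finset (Sym2 V))
    (hM : ∀ i, IsPerfectMatchingFinset G (M i))
    (C : G.Subgraph)
    (hCedges : C.edgeSet ⊆ ↑(matchClass G M 0 ∪ matchClass G M 2))
    (hCconn : C.Connected)
    (hCreg : ∀ v ∈ C.verts, (C.neighborSet v).ncard = 2) :
    (Odd C.edgeSet.ncard ↔
        Odd (C.verts ∩ {v | ∃ e ∈ matchClass G M 3, v ∈ e}).ncard) ∧
      ((C.verts ∩ {v | ∃ e ∈ matchClass G M 3, v ∈ e}).ncard = 0 →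
        Even C.edgeSet.ncard) := by
  classical
  set P : V → Prop := fun v => ∃ e ∈ matchClass G M 3, v ∈ e with hPdef
  -- finite versions
  have hCvfin : C.verts.Finite := Set.toFinite _
  have hCEfin : C.edgeSet.Finite := Set.toFinite _
  set Cv : Finset V := hCvfin.toFinset with hCv
  set CE : Finset (Sym2 V) := hCEfin.toFinset with hCE
  have hmemCv : ∀ v, v ∈ Cv ↔ v ∈ C.verts := fun v => hCvfin.mem_toFinset
  have hmemCE : ∀ e, e ∈ CE ↔ e ∈ C.edgeSet := fun e => hCEfin.mem_toFinset
  -- edges of C are G edges of multiplicity 0 or 2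
  have hmult : ∀ e ∈ C.edgeSet, e ∈ G.edgeSet ∧
      (edgeMult M e = 0 ∨ edgeMult M e = 2) := by
    intro e he
    have h := hCedges he
    rw [Finset.coe_union, Set.mem_union] at h
    rcases h with h | h <;>
      · rw [Finset.mem_coe, matchClass, mem_filter, SimpleGraph.mem_edgeFinset] at h
        exact ⟨h.1, by omega⟩
  -- local structure at each vertex of C
  have hlocal : ∀ v ∈ C.verts, ∃ a b : V, a ≠ b ∧ C.Adj v a ∧ C.Adj v b ∧
      (∀ e ∈ C.edgeSet, v ∈ e → e = s(v, a) ∨ e = s(v, b)) := by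
    intro v hv
    obtain ⟨a, b, hab, hset⟩ := Set.ncard_eq_two.mp (hCreg v hv)
    have ha : C.Adj v a := by
      have : a ∈ C.neighborSet v := by rw [hset]; exact Set.mem_insert a {b}
      exact this
    have hb : C.Adj v b := by
      have : b ∈ C.neighborSet v := by
        rw [hset]; exact Set.mem_insert_of_mem a rfl
      exact this
    refine ⟨a, b, hab, ha, hb, ?_⟩
    intro e he hve
    induction e with
    | h x y =>
      rcases Sym2.mem_iff.mp hve with rfl | rfl
      · have : y ∈ C.neighborSet v := SimpleGraph.Subgraph.mem_edgeSet.mp he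
        rw [hset] at this
        rcases this with rfl | rfl
        · exact Or.inl rfl
        · exact Or.inr rfl
      · have : x ∈ C.neighborSet v :=
          (SimpleGraph.Subgraph.mem_edgeSet.mp he).symm
        rw [hset] at this
        rcases this with rfl | rfl
        · exact Or.inl (Sym2.eq_swap)
        · exact Or.inr (Sym2.eq_swap)
  -- the set of C-edges of multiplicity 2
  set F2 : Finset (Sym2 V) := CE.filter (fun e => edgeMult M e = 2) with hF2
  -- key per-vertex filter computations
  have hkey : ∀ v ∈ Cv, (F2.filter (fun e => v ∈ e)).card = if P v then 0 else 1 := by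
    intro v hv
    rw [hmemCv] at hv
    obtain ⟨a, b, hab, ha, hb, huniq⟩ := hlocal v hv
    have heaC : s(v, a) ∈ C.edgeSet := SimpleGraph.Subgraph.mem_edgeSet.mpr ha
    have hebC : s(v, b) ∈ C.edgeSet := SimpleGraph.Subgraph.mem_edgeSet.mpr hb
    have hma := (hmult _ heaC).2
    have hmb := (hmult _ hebC).2
    obtain ⟨hdi1, hdi2⟩ := dichotomy G hcubic M hM hab
      (C.adj_sub ha) (C.adj_sub hb) hma hmb
    by_cases hPv : P v
    · rw [if_pos hPv]
      obtain ⟨h0a, h0b⟩ := hdi1 hPv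
      rw [Finset.card_eq_zero, Finset.filter_eq_empty_iff]
      intro e he hve
      rw [hF2, mem_filter, hmemCE] at he
      rcases huniq e he.1 hve with rfl | rfl
      · rw [h0a] at he; omega
      · rw [h0b] at he; omega
    · rw [if_neg hPv]
      have hsum := hdi2 hPv
      rw [Finset.card_eq_one]
      rcases hma with h0a | h2a
      · have h2b : edgeMult M s(v, b) = 2 := by omega
        refine ⟨s(v, b), ?_⟩
        ext e
        rw [mem_filter, mem_singleton, hF2, mem_filter, hmemCE]
        constructor
        · rintro ⟨⟨heC, he2⟩, hve⟩
          rcases huniq e heC hve with rfl | rfl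
          · rw [h0a] at he2; omega
          · rfl
        · rintro rfl
          exact ⟨⟨hebC, h2b⟩, Sym2.mem_mk_left v b⟩
      · have h0b : edgeMult M s(v, b) = 0 := by omega
        refine ⟨s(v, a), ?_⟩
        ext e
        rw [mem_filter, mem_singleton, hF2, mem_filter, hmemCE]
        constructor
        · rintro ⟨⟨heC, he2⟩, hve⟩
          rcases huniq e heC hve with rfl | rfl
          · rfl
          · rw [h0b] at he2; omega
        · rintro rfl
          exact ⟨⟨heaC, h2a⟩, Sym2.mem_mk_left v a⟩
  -- every edge of CE has exactly two endpoints, all in Cv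
  have hends : ∀ S : Finset (Sym2 V), (∀ e ∈ S, e ∈ C.edgeSet) →
      ∀ e ∈ S, (Cv.filter (fun v => v ∈ e)).card = 2 := by
    intro S hS e he
    have heC := hS e he
    induction e with
    | h x y =>
      have hadj : C.Adj x y := SimpleGraph.Subgraph.mem_edgeSet.mp heC
      have hxy : x ≠ y := (C.adj_sub hadj).ne
      have : Cv.filter (fun v => v ∈ s(x, y)) = {x, y} := by
        ext z
        rw [mem_filter, mem_insert, mem_singleton, hmemCv, Sym2.mem_iff]
        constructor
        · rintro ⟨_, h⟩; exact h
        · rintro (rfl | rfl)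
          · exact ⟨C.edge_vert hadj, Or.inl rfl⟩
          · exact ⟨C.edge_vert hadj.symm, Or.inr rfl⟩
      rw [this, Finset.card_pair hxy]
  -- double counting for F2
  have hcount2 : (Cv.filter (fun v => ¬ P v)).card = 2 * F2.card := by
    have h1 : ∑ v ∈ Cv, (F2.filter (fun e => v ∈ e)).card
        = (Cv.filter (fun v => ¬ P v)).card := by
      rw [Finset.card_filter]
      refine Finset.sum_congr rfl fun v hv => ?_
      rw [hkey v hv]
      by_cases h : P v <;> simp [h]
    have h2 : ∑ e ∈ F2, (Cv.filter (fun v => v ∈ e)).card = 2 * F2.card := by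
      rw [Finset.sum_congr rfl (hends F2
        (fun e he => (hmemCE e).mp (mem_filter.mp he).1))]
      rw [Finset.sum_const, smul_eq_mul, mul_comm]
    rw [← h1, filter_card_comm, h2]
  -- handshake: |Cv| = |CE|
  have hhand : Cv.card = CE.card := by
    have h1 : ∑ v ∈ Cv, (CE.filter (fun e => v ∈ e)).card = 2 * Cv.card := by
      rw [Finset.sum_congr rfl (fun v hv => ?_), Finset.sum_const, smul_eq_mul,
        mul_comm]
      rw [hmemCv] at hv
      obtain ⟨a, b, hab, ha, hb, huniq⟩ := hlocal v hv
      have hne : s(v, a) ≠ s(v, b) := fun h => hab (Sym2.congr_right.mp h)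
      have : CE.filter (fun e => v ∈ e) = {s(v, a), s(v, b)} := by
        ext e
        rw [mem_filter, mem_insert, mem_singleton, hmemCE]
        constructor
        · rintro ⟨heC, hve⟩; exact huniq e heC hve
        · rintro (rfl | rfl)
          · exact ⟨SimpleGraph.Subgraph.mem_edgeSet.mpr ha, Sym2.mem_mk_left v a⟩
          · exact ⟨SimpleGraph.Subgraph.mem_edgeSet.mpr hb, Sym2.mem_mk_left v b⟩
      rw [this, Finset.card_pair hne]
    have h2 : ∑ e ∈ CE, (Cv.filter (fun v => v ∈ e)).card = 2 * CE.card := by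
      rw [Finset.sum_congr rfl (hends CE (fun e he => (hmemCE e).mp he)),
        Finset.sum_const, smul_eq_mul, mul_comm]
    have := filter_card_comm Cv CE (fun v e => v ∈ e)
    rw [h1, h2] at this
    omega
  -- identify the ncards
  have hEcard : C.edgeSet.ncard = CE.card := Set.ncard_eq_toFinset_card _ hCEfin
  have hAcard : (C.verts ∩ {v | P v}).ncard = (Cv.filter P).card := by
    have : C.verts ∩ {v | P v} = ↑(Cv.filter P) := by
      ext v
      simp only [Finset.coe_filter, Set.mem_inter_iff, Set.mem_setOf_eq, hmemCv]
    rw [this, Set.ncard_coe_finset]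
  have hsplit : (Cv.filter P).card + (Cv.filter (fun v => ¬ P v)).card = Cv.card :=
    Finset.card_filter_add_card_filter_not P
  rw [hEcard, hAcard]
  rw [hcount2] at hsplit
  constructor
  · rw [Nat.odd_iff, Nat.odd_iff]; omega
  · intro h; rw [Nat.even_iff]; omega
end

section
/- Let G be a cubic graph with three perfect matchings M1, M2, M3, E_i the set of edges in exactly i of them, and C a circuit of G[E_0 ∪ E_2]. Then σ(C) ≤ |E(C) ∩ E_0|, where σ(C) is the number of vertices of C incident with an edge of E_3. -/
open Finset

lemma sum_mult {V : Type*} [Fintype V] [DecidableEq V]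
    (G : SimpleGraph V) [DecidableRel G.Adj]
    (hcubic : ∀ v : V, G.degree v = 3)
    (M : Fin 3 → Finset (Sym2 V))
    (hM : ∀ i, IsPerfectMatchingFinset G (M i)) (v : V) :
    ∑ e ∈ G.incidenceFinset v, edgeMult M e = 3 := by
  classical
  have h1 : ∑ e ∈ G.incidenceFinset v, edgeMult M e
      = ∑ i : Fin 3, ((G.incidenceFinset v).filter (fun e => e ∈ M i)).card := by
    simp only [edgeMult, Finset.card_filter]
    rw [Finset.sum_comm]
  rw [h1]
  have h2 : ∀ i : Fin 3, (G.incidenceFinset v).filter (fun e => e ∈ M i)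
      = (M i).filter (fun e => v ∈ e) := by
    intro i
    ext e
    simp only [Finset.mem_filter, SimpleGraph.mem_incidenceFinset,
      SimpleGraph.incidenceSet, Set.mem_sep_iff]
    constructor
    · rintro ⟨⟨_, hv⟩, hm⟩; exact ⟨hm, hv⟩
    · rintro ⟨hm, hv⟩; exact ⟨⟨(hM i).1 e hm, hv⟩, hm⟩
  simp [h2, (hM _).2 v]

lemma mult_zero_of_other {V : Type*} [Fintype V] [DecidableEq V]
    (G : SimpleGraph V) [DecidableRel G.Adj]
    (hcubic : ∀ v : V, G.degree v = 3)
    (M : Fin 3 → Finset (Sym2 V))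
    (hM : ∀ i, IsPerfectMatchingFinset G (M i)) (v : V)
    (e3 f : Sym2 V) (he3 : e3 ∈ G.edgeFinset) (hm3 : edgeMult M e3 = 3)
    (hv3 : v ∈ e3) (hf : f ∈ G.edgeFinset) (hvf : v ∈ f) (hne : f ≠ e3) :
    edgeMult M f = 0 := by
  classical
  have hsum := sum_mult G hcubic M hM v
  have he3I : e3 ∈ G.incidenceFinset v := by
    rw [SimpleGraph.mem_incidenceFinset]
    exact ⟨(SimpleGraph.mem_edgeFinset).1 he3, hv3⟩
  have hfI : f ∈ (G.incidenceFinset v).erase e3 := by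
    refine Finset.mem_erase.2 ⟨hne, ?_⟩
    rw [SimpleGraph.mem_incidenceFinset]
    exact ⟨(SimpleGraph.mem_edgeFinset).1 hf, hvf⟩
  rw [← Finset.add_sum_erase _ _ he3I, hm3] at hsum
  have h0 : ∑ e ∈ (G.incidenceFinset v).erase e3, edgeMult M e = 0 := by omega
  exact Finset.sum_eq_zero_iff.1 h0 f hfI

/-- For a circuit `C` of `G[E_0 ∪ E_2]`, `σ(C) ≤ |E(C) ∩ E_0|`. -/
theorem stmt6 {V : Type*} [Fintype V] [DecidableEq V]
    (G : SimpleGraph V) [DecidableRel G.Adj]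
    (hcubic : ∀ v : V, G.degree v = 3)
    (M : Fin 3 → Finset (Sym2 V))
    (hM : ∀ i, IsPerfectMatchingFinset G (M i))
    (C : G.Subgraph)
    (hCedges : C.edgeSet ⊆ ↑(matchClass G M 0 ∪ matchClass G M 2))
    (hCconn : C.Connected)
    (hCreg : ∀ v ∈ C.verts, (C.neighborSet v).ncard = 2) :
    (C.verts ∩ {v | ∃ e ∈ matchClass G M 3, v ∈ e}).ncard ≤
      (C.edgeSet ∩ ↑(matchClass G M 0)).ncard := by
  classical
  set A : Set V := C.verts ∩ {v | ∃ e ∈ matchClass G M 3, v ∈ e} with hA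
  set B : Set (Sym2 V) := C.edgeSet ∩ ↑(matchClass G M 0) with hB
  have hAfin : A.Finite := Set.toFinite _
  have hBfin : B.Finite := Set.toFinite _
  rw [Set.ncard_eq_toFinset_card _ hAfin, Set.ncard_eq_toFinset_card _ hBfin]
  set S := hAfin.toFinset
  set T := hBfin.toFinset
  -- key: each vertex of S has ≥ 2 edges of T containing it
  have key : ∀ v ∈ S, 2 ≤ (T.bipartiteAbove (fun v e => v ∈ e) v).card := by
    intro v hv
    rw [Set.Finite.mem_toFinset] at hv
    obtain ⟨hvC, e3, he3, hv3⟩ := hv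
    have hn := hCreg v hvC
    obtain ⟨w1, w2, hw12, hset⟩ := Set.ncard_eq_two.1 hn
    have hw1 : C.Adj v w1 := by
      have : w1 ∈ C.neighborSet v := by rw [hset]; simp
      exact this
    have hw2 : C.Adj v w2 := by
      have : w2 ∈ C.neighborSet v := by rw [hset]; simp
      exact this
    have he3' := Finset.mem_filter.1 he3
    have hedge : ∀ w, C.Adj v w → s(v, w) ∈ T ∧ v ∈ s(v, w) := by
      intro w hw
      have hCe : s(v, w) ∈ C.edgeSet := hw
      have hGe : s(v, w) ∈ G.edgeFinset :=
        SimpleGraph.mem_edgeFinset.2 (C.edgeSet_subset hCe)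
      have hne : s(v, w) ≠ e3 := by
        intro h
        have := hCedges hCe
        rw [h] at this
        simp only [Finset.coe_union, Set.mem_union, Finset.mem_coe, matchClass,
          Finset.mem_filter] at this
        have hm3 := (Finset.mem_filter.1 he3).2
        rcases this with ⟨_, h0⟩ | ⟨_, h2⟩ <;> omega
      have h0 : edgeMult M s(v, w) = 0 :=
        mult_zero_of_other G hcubic M hM v e3 s(v, w) he3'.1 he3'.2 hv3 hGe
          (Sym2.mem_mk_left v w) hne
      refine ⟨?_, Sym2.mem_mk_left v w⟩
      rw [Set.Finite.mem_toFinset]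
      exact ⟨hCe, Finset.mem_filter.2 ⟨hGe, h0⟩⟩
    obtain ⟨ht1, hm1⟩ := hedge w1 hw1
    obtain ⟨ht2, hm2⟩ := hedge w2 hw2
    have hpair : ({s(v, w1), s(v, w2)} : Finset (Sym2 V))
        ⊆ T.bipartiteAbove (fun v e => v ∈ e) v := by
      intro e he
      simp only [Finset.mem_insert, Finset.mem_singleton] at he
      rcases he with rfl | rfl <;>
        · rw [Finset.bipartiteAbove, Finset.mem_filter]
          exact ⟨by assumption, Sym2.mem_mk_left v _⟩
    have hcard : ({s(v, w1), s(v, w2)} : Finset (Sym2 V)).card = 2 := by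
      rw [Finset.card_insert_of_notMem, Finset.card_singleton]
      simp only [Finset.mem_singleton]
      intro h
      exact hw12 (Sym2.congr_right.1 h)
    calc 2 = _ := hcard.symm
      _ ≤ _ := Finset.card_le_card hpair
  have key2 : ∀ e ∈ T, (S.bipartiteBelow (fun v e => v ∈ e) e).card ≤ 2 := by
    intro e _
    induction e with
    | _ a b =>
      have : S.bipartiteBelow (fun v e => v ∈ e) s(a, b) ⊆ {a, b} := by
        intro v hv
        rw [Finset.bipartiteBelow, Finset.mem_filter] at hv
        have := hv.2
        rw [Sym2.mem_iff] at this
        simpa using this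
      calc (S.bipartiteBelow (fun v e => v ∈ e) s(a, b)).card
          ≤ ({a, b} : Finset V).card := Finset.card_le_card this
        _ ≤ 2 := Finset.card_insert_le _ _ |>.trans (by simp)
  have := Finset.card_mul_le_card_mul (fun v e => v ∈ e) key key2
  omega
end

section
/- Let G be a cubic graph and H the Petersen graph. If φ: E(G) → E(H) maps any three mutually adjacent edges of G to three mutually adjacent edges of H, then the preimage under φ of any perfect matching of H is a perfect matching of G. -/
open Finset

/-- The Petersen graph as the Kneser graph `K(5,2)`. -/
def petersen : SimpleGraph {s : Finset (Fin 5) // s.card = 2} where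
  Adj a b := Disjoint a.1 b.1
  symm := ⟨fun a b h => h.symm⟩
  loopless := ⟨fun a h => by
    have h2 := a.2
    simp only [disjoint_self] at h
    simp [h] at h2⟩

instance : DecidableRel petersen.Adj :=
  fun a b => inferInstanceAs (Decidable (Disjoint a.1 b.1))

/-- Three edges are mutually adjacent: pairwise distinct and pairwise sharing a
vertex. -/
def MutuallyAdjacent {W : Type*} (e f g : Sym2 W) : Prop :=
  e ≠ f ∧ e ≠ g ∧ f ≠ g ∧ (∃ v, v ∈ e ∧ v ∈ f) ∧ (∃ v, v ∈ e ∧ v ∈ g) ∧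
    ∃ v, v ∈ f ∧ v ∈ g

/-- A Petersen coloring of `G`: a map from edges of `G` to edges of the
Petersen graph sending mutually adjacent triples of edges to mutually adjacent
triples of edges. -/
def IsPetersenColoring {V : Type*} (G : SimpleGraph V)
    (φ : Sym2 V → Sym2 {s : Finset (Fin 5) // s.card = 2}) : Prop :=
  (∀ e ∈ G.edgeSet, φ e ∈ petersen.edgeSet) ∧
    ∀ e ∈ G.edgeSet, ∀ f ∈ G.edgeSet, ∀ g ∈ G.edgeSet,
      MutuallyAdjacent e f g → MutuallyAdjacent (φ e) (φ f) (φ g)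

/-!
The three edges at a vertex `v` of `G` are mutually adjacent, so their images are three mutually
adjacent edges of the Petersen graph. As the Petersen graph is triangle-free, these share a vertex
`w`, and as it is cubic, they are all the edges at `w`. Hence `φ` maps the edges at `v` bijectively
onto the edges at `w`, and exactly one of the latter lies in the perfect matching `M`.
-/

open SimpleGraph

section TriangleFree

variable {W : Type*} {H : SimpleGraph W}

theorem MutuallyAdjacent.exists_mem_of_cliqueFree_three (hH : H.CliqueFree 3)
    {e f g : Sym2 W} (he : e ∈ H.edgeSet) (hf : f ∈ H.edgeSet) (hg : g ∈ H.edgeSet)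
    (h : MutuallyAdjacent e f g) : ∃ w, w ∈ e ∧ w ∈ f ∧ w ∈ g := by
  classical
  obtain ⟨-, -, -, ⟨x, hxe, hxf⟩, ⟨y, hye, hyg⟩, ⟨z, hzf, hzg⟩⟩ := h
  by_contra! hnone
  have hxy : x ≠ y := fun h => hnone x hxe hxf (h ▸ hyg)
  have hxz : x ≠ z := fun h => hnone z (h ▸ hxe) hzf hzg
  have hyz : y ≠ z := fun h => hnone y hye (h ▸ hzf) hyg
  rw [(Sym2.mem_and_mem_iff hxy).mp ⟨hxe, hye⟩, mem_edgeSet] at he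
  rw [(Sym2.mem_and_mem_iff hxz).mp ⟨hxf, hzf⟩, mem_edgeSet] at hf
  rw [(Sym2.mem_and_mem_iff hyz).mp ⟨hyg, hzg⟩, mem_edgeSet] at hg
  exact hH {x, y, z} (is3Clique_triple_iff.mpr ⟨he, hf, hg⟩)

theorem MutuallyAdjacent.exists_incidenceFinset_eq [Fintype W] [DecidableEq W]
    [DecidableRel H.Adj] (hH : H.CliqueFree 3) (hreg : H.IsRegularOfDegree 3)
    {e f g : Sym2 W} (he : e ∈ H.edgeSet) (hf : f ∈ H.edgeSet) (hg : g ∈ H.edgeSet)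
    (h : MutuallyAdjacent e f g) : ∃ w, H.incidenceFinset w = {e, f, g} := by
  obtain ⟨w, hwe, hwf, hwg⟩ := h.exists_mem_of_cliqueFree_three hH he hf hg
  obtain ⟨hef, heg, hfg, -⟩ := h
  refine ⟨w, (eq_of_subset_of_card_le ?_ ?_).symm⟩
  · simp [insert_subset_iff, mem_incidenceFinset, incidenceSet, *]
  · rw [card_incidenceFinset_eq_degree, hreg w, card_eq_three.mpr ⟨e, f, g, hef, heg, hfg, rfl⟩]

end TriangleFree

theorem SimpleGraph.exists_incidenceFinset_eq_mutuallyAdjacent {V : Type*} [Fintype V]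
    [DecidableEq V] {G : SimpleGraph V} [DecidableRel G.Adj] {v : V} (hv : G.degree v = 3) :
    ∃ a b c, G.incidenceFinset v = {a, b, c} ∧ MutuallyAdjacent a b c := by
  rw [← card_incidenceFinset_eq_degree, card_eq_three] at hv
  obtain ⟨a, b, c, hab, hac, hbc, hI⟩ := hv
  have hmem : ∀ e ∈ ({a, b, c} : Finset _), v ∈ e := fun e he =>
    ((mem_incidenceFinset _ _ _).mp (hI ▸ he)).2
  exact ⟨a, b, c, hI, hab, hac, hbc, ⟨v, hmem a (by simp), hmem b (by simp)⟩,
    ⟨v, hmem a (by simp), hmem c (by simp)⟩, ⟨v, hmem b (by simp), hmem c (by simp)⟩⟩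

theorem petersen_cliqueFree_three : petersen.CliqueFree 3 := by
  have htriangle : ∀ a b c, petersen.Adj a b → petersen.Adj a c → ¬petersen.Adj b c := by
    decide
  intro t ht
  obtain ⟨a, b, c, hab, hac, hbc, -⟩ := is3Clique_iff.mp ht
  exact htriangle a b c hab hac hbc

theorem petersen_isRegularOfDegree_three : petersen.IsRegularOfDegree 3 := by
  unfold IsRegularOfDegree
  decide

theorem IsPetersenColoring.exists_image_incidenceFinset_eq {V : Type*} [Fintype V]
    [DecidableEq V] {G : SimpleGraph V} [DecidableRel G.Adj]
    {φ : Sym2 V → Sym2 {s : Finset (Fin 5) // s.card = 2}} (hφ : IsPetersenColoring G φ)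
    {v : V} (hv : G.degree v = 3) :
    ∃ w, Set.InjOn φ (G.incidenceFinset v) ∧
      (G.incidenceFinset v).image φ = petersen.incidenceFinset w := by
  obtain ⟨a, b, c, hI, habc⟩ := exists_incidenceFinset_eq_mutuallyAdjacent hv
  have hedge : ∀ e ∈ G.incidenceFinset v, e ∈ G.edgeSet := fun e he =>
    ((mem_incidenceFinset _ _ _).mp he).1
  have ha := hedge a (by simp [hI])
  have hb := hedge b (by simp [hI])
  have hc := hedge c (by simp [hI])
  obtain ⟨w, hw⟩ := (hφ.2 a ha b hb c hc habc).exists_incidenceFinset_eq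
    petersen_cliqueFree_three petersen_isRegularOfDegree_three (hφ.1 a ha) (hφ.1 b hb) (hφ.1 c hc)
  have himage : (G.incidenceFinset v).image φ = petersen.incidenceFinset w := by
    simp [hI, hw, image_insert]
  refine ⟨w, card_image_iff.mp ?_, himage⟩
  rw [himage, card_incidenceFinset_eq_degree, card_incidenceFinset_eq_degree, hv,
    petersen_isRegularOfDegree_three w]

theorem IsPerfectMatchingFinset.card_filter_incidenceFinset {W : Type*} [Fintype W]
    [DecidableEq W] {H : SimpleGraph W} [DecidableRel H.Adj] {M : Finset (Sym2 W)}
    (hM : IsPerfectMatchingFinset H M) (w : W) :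
    ((H.incidenceFinset w).filter (· ∈ M)).card = 1 := by
  rw [← hM.2 w]
  congr 1
  ext e
  simp only [mem_filter, mem_incidenceFinset]
  exact ⟨fun ⟨⟨_, hwe⟩, heM⟩ => ⟨heM, hwe⟩, fun ⟨heM, hwe⟩ => ⟨⟨hM.1 e heM, hwe⟩, heM⟩⟩

theorem SimpleGraph.filter_filter_edgeFinset_mem {V : Type*} [Fintype V] [DecidableEq V]
    (G : SimpleGraph V) [DecidableRel G.Adj] (p : Sym2 V → Prop) [DecidablePred p] (v : V) :
    ((G.edgeFinset.filter p).filter (v ∈ ·)) = (G.incidenceFinset v).filter p := by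
  rw [incidenceFinset_eq_filter, filter_filter, filter_filter]
  exact filter_congr fun _ _ => and_comm

/-- The preimage of a perfect matching of the Petersen graph under a Petersen
coloring of a cubic graph is a perfect matching. -/
theorem stmt14 {V : Type*} [Fintype V] [DecidableEq V]
    (G : SimpleGraph V) [DecidableRel G.Adj]
    (hcubic : ∀ v : V, G.degree v = 3)
    (φ : Sym2 V → Sym2 {s : Finset (Fin 5) // s.card = 2})
    (hφ : IsPetersenColoring G φ) :
    ∀ M : Finset (Sym2 {s : Finset (Fin 5) // s.card = 2}),
      IsPerfectMatchingFinset petersen M →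
        IsPerfectMatchingFinset G (G.edgeFinset.filter fun e => φ e ∈ M) := by
  intro M hM
  refine ⟨fun e he => mem_edgeFinset.mp (mem_filter.mp he).1, fun v => ?_⟩
  obtain ⟨w, hinj, himage⟩ := hφ.exists_image_incidenceFinset_eq (hcubic v)
  rw [filter_filter_edgeFinset_mem, ← card_image_of_injOn (hinj.mono (filter_subset _ _)),
    ← filter_image (p := (· ∈ M)), himage]
  exact hM.card_filter_incidenceFinset w
end
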